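/- In the setting of the previous variation-of-parameters construction, assume additionally that φ is L-periodic and odd, and that ∫₀^L y(s) ds = 0. Then p(L) = 0 = p(0) and p'(L) = 0 = p'(0), and consequently p is L-periodic: p(x + L) = p(x) for all x ∈ ℝ. -/

import Mathlib

open Real MeasureTheory

/-!
Both `y` and `φ'` solve Hill's equation `z'' + (cosh φ / ω) z = 0`, whose coefficient is
`L`-periodic, and so does `y(· + L)`. Wronskians of solutions are constant, and `φ'` is periodic,
so `y(· + L)` and `y` have the same Wronskian with `φ'`, which is nonzero; hence
`y(x + L) = y(x) + β φ'(x)` for a constant `β`. Integrating and using `∫₀^L y = 0` gives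
`∫₀^{x+L} y = ∫₀^x y + β φ(x)`, and substituting both shifts into the formula for `p(x + L)`
the `β`-terms cancel. Periodicity then reduces the values at `L` to those at `0`.
-/

theorem Function.Periodic.deriv {𝕜 F : Type*} [NontriviallyNormedField 𝕜] [NormedAddCommGroup F]
    [NormedSpace 𝕜 F] {f : 𝕜 → F} {c : 𝕜} (h : Function.Periodic f c) :
    Function.Periodic (deriv f) c := fun x => by
  rw [← deriv_comp_add_const, h.funext]

def IsHillSolution (q z : ℝ → ℝ) : Prop :=
  Differentiable ℝ z ∧ Differentiable ℝ (deriv z) ∧ ∀ x, deriv (deriv z) x + q x * z x = 0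

noncomputable def wronskian (f g : ℝ → ℝ) (x : ℝ) : ℝ :=
  f x * deriv g x - deriv f x * g x

theorem mul_wronskian_eq (f g h : ℝ → ℝ) (x : ℝ) :
    f x * wronskian g h x = wronskian f h x * g x - wronskian f g x * h x := by
  unfold wronskian
  ring

theorem wronskian_comp_add_const {f g : ℝ → ℝ} {L : ℝ} (hg : Function.Periodic g L) (x : ℝ) :
    wronskian (fun t => f (t + L)) g x = wronskian f g (x + L) := by
  simp only [wronskian, deriv_comp_add_const, hg x, hg.deriv x]

namespace IsHillSolution

variable {q f g : ℝ → ℝ}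

theorem hasDerivAt_wronskian (hf : IsHillSolution q f) (hg : IsHillSolution q g) (x : ℝ) :
    HasDerivAt (wronskian f g) 0 x := by
  have h : HasDerivAt (fun t => f t * deriv g t - deriv f t * g t) _ x :=
    ((hf.1 x).hasDerivAt.mul (hg.2.1 x).hasDerivAt).sub
      ((hf.2.1 x).hasDerivAt.mul (hg.1 x).hasDerivAt)
  exact h.congr_deriv (by linear_combination f x * hg.2.2 x - g x * hf.2.2 x)

theorem wronskian_eq (hf : IsHillSolution q f) (hg : IsHillSolution q g) (x a : ℝ) :
    wronskian f g x = wronskian f g a :=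
  is_const_of_deriv_eq_zero (fun x => (hasDerivAt_wronskian hf hg x).differentiableAt)
    (fun x => (hasDerivAt_wronskian hf hg x).deriv) x a

theorem comp_add_const {L : ℝ} (hq : Function.Periodic q L) (hf : IsHillSolution q f) :
    IsHillSolution q (fun x => f (x + L)) := by
  have hd : deriv (fun x => f (x + L)) = fun x => deriv f (x + L) :=
    funext fun x => deriv_comp_add_const f L x
  refine ⟨hf.1.comp (differentiable_id.add_const L), ?_, fun x => ?_⟩
  · rw [hd]
    exact hf.2.1.comp (differentiable_id.add_const L)
  · rw [hd, deriv_comp_add_const, ← hq x]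
    exact hf.2.2 (x + L)

theorem exists_comp_add_const_eq {L : ℝ} (hq : Function.Periodic q L) (hf : IsHillSolution q f)
    (hg : IsHillSolution q g) (hgL : Function.Periodic g L) (hW : wronskian f g 0 ≠ 0) :
    ∃ β, ∀ x, f (x + L) = f x + β * g x := by
  set f₁ := fun x => f (x + L)
  have hf₁ := hf.comp_add_const hq
  refine ⟨-wronskian f₁ f 0 / wronskian f g 0, fun x => ?_⟩
  have key := mul_wronskian_eq f₁ f g x
  rw [wronskian_comp_add_const hgL, hf.wronskian_eq hg (x + L) 0, hf.wronskian_eq hg x 0,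
    hf₁.wronskian_eq hf x 0] at key
  field_simp
  linear_combination key

end IsHillSolution

theorem isHillSolution_of_ode {ω : ℝ} {Q z : ℝ → ℝ} (hω : ω ≠ 0) (hz : ContDiff ℝ 2 z)
    (hode : ∀ x, ω * deriv (deriv z) x + Q x * z x = 0) :
    IsHillSolution (fun x => Q x / ω) z := by
  refine ⟨hz.differentiable (by norm_num), hz.differentiable_deriv_two, fun x => ?_⟩
  field_simp
  linear_combination hode x

theorem isHillSolution_deriv_of_sinhGordon {ω : ℝ} {φ : ℝ → ℝ} (hω : ω ≠ 0)
    (hφ : ContDiff ℝ 2 φ)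
    (hode : ∀ x, ω * deriv (deriv φ) x + sinh (φ x) = 0) :
    IsHillSolution (fun x => cosh (φ x) / ω) (deriv φ) := by
  have hφ'' : deriv (deriv φ) = fun x => -sinh (φ x) / ω := funext fun x => by
    field_simp
    linear_combination hode x
  have hφ₁ : Differentiable ℝ φ := hφ.differentiable (by norm_num)
  have hφ''' (x : ℝ) : HasDerivAt (deriv (deriv φ)) (-(cosh (φ x) * deriv φ x) / ω) x := by
    rw [hφ'']
    exact ((hφ₁ x).hasDerivAt.sinh.neg).div_const ω
  refine ⟨hφ.differentiable_deriv_two, fun x => (hφ''' x).differentiableAt, fun x => ?_⟩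
  rw [(hφ''' x).deriv]
  field_simp
  ring

theorem integral_add_period_eq {f g : ℝ → ℝ} {L β : ℝ} (hf : Continuous f)
    (hg : Differentiable ℝ g) (hg' : Continuous (deriv g))
    (hshift : ∀ x, f (x + L) = f x + β * deriv g x) (hmean : ∫ s in (0 : ℝ)..L, f s = 0)
    (x : ℝ) :
    ∫ s in (0 : ℝ)..x + L, f s = (∫ s in (0 : ℝ)..x, f s) + β * (g x - g 0) := by
  calc ∫ s in (0 : ℝ)..x + L, f s
      = (∫ s in (0 : ℝ)..L, f s) + ∫ s in L..x + L, f s :=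
        (intervalIntegral.integral_add_adjacent_intervals (hf.intervalIntegrable 0 L)
          (hf.intervalIntegrable L (x + L))).symm
    _ = ∫ s in (0 : ℝ)..x, f (s + L) := by
        rw [hmean, zero_add, intervalIntegral.integral_comp_add_right, zero_add]
    _ = ∫ s in (0 : ℝ)..x, (f s + β * deriv g s) := by simp only [hshift]
    _ = (∫ s in (0 : ℝ)..x, f s) + β * (g x - g 0) := by
        rw [intervalIntegral.integral_add (hf.intervalIntegrable 0 x)
            ((hg'.intervalIntegrable 0 x).const_mul β), intervalIntegral.integral_const_mul,
          intervalIntegral.integral_deriv_eq_sub (fun t _ => hg t) (hg'.intervalIntegrable 0 x)]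

theorem hasDerivAt_integral_mul_deriv_sub_mul {y g : ℝ → ℝ} {x : ℝ} (hy : Continuous y)
    (hyx : DifferentiableAt ℝ y x) (hgx : DifferentiableAt ℝ g x)
    (hg'x : DifferentiableAt ℝ (deriv g) x) :
    HasDerivAt (fun t => (∫ s in (0 : ℝ)..t, y s) * deriv g t - y t * g t)
      ((∫ s in (0 : ℝ)..x, y s) * deriv (deriv g) x - deriv y x * g x) x := by
  have h := ((hy.integral_hasStrictDerivAt 0 x).hasDerivAt.mul hg'x.hasDerivAt).sub
    (hyx.hasDerivAt.mul hgx.hasDerivAt)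
  exact h.congr_deriv (by ring)

theorem variation_of_parameters_periodic_general
    (ω L : ℝ) (hω : 0 < ω) (φ y : ℝ → ℝ)
    (hφ : ContDiff ℝ 2 φ)
    (hφode : ∀ x : ℝ, ω * deriv (deriv φ) x + Real.sinh (φ x) = 0)
    (hφodd : ∀ x : ℝ, φ (-x) = -φ x)
    (hφper : ∀ x : ℝ, φ (x + L) = φ x)
    (hφ'0 : deriv φ 0 ≠ 0)
    (hy : ContDiff ℝ 2 y)
    (hyode : ∀ x : ℝ, ω * deriv (deriv y) x + Real.cosh (φ x) * y x = 0)
    (hy'0 : deriv y 0 = 1 / deriv φ 0)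
    (hymean : (∫ s in (0:ℝ)..L, y s) = 0)
    (p : ℝ → ℝ)
    (hp : ∀ x : ℝ, p x = (1/ω) * ((∫ s in (0:ℝ)..x, y s) * deriv φ x - y x * φ x)) :
    (p L = 0 ∧ p 0 = 0) ∧ (deriv p L = 0 ∧ deriv p 0 = 0) ∧
      (∀ x : ℝ, p (x + L) = p x) := by
  have hφ0 : φ 0 = 0 := by linarith [neg_zero (G := ℝ) ▸ hφodd 0]
  have hφ''0 : deriv (deriv φ) 0 = 0 := by simpa [hφ0, hω.ne'] using hφode 0
  have hφL : Function.Periodic φ L := hφper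
  have hq : Function.Periodic (fun x => cosh (φ x) / ω) L := fun x => by simp only [hφper x]
  have hW : wronskian y (deriv φ) 0 ≠ 0 := by simp [wronskian, hφ''0, hy'0, hφ'0]
  obtain ⟨β, hshift⟩ := (isHillSolution_of_ode hω.ne' hy hyode).exists_comp_add_const_eq hq
    (isHillSolution_deriv_of_sinhGordon hω.ne' hφ hφode) hφL.deriv hW
  have hpL : Function.Periodic p L := fun x => by
    rw [hp, hp, integral_add_period_eq hy.continuous (hφ.differentiable (by norm_num))
      (hφ.continuous_deriv (by norm_num)) hshift hymean, hshift, hφper, hφL.deriv x, hφ0]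
    ring
  have hp0 : p 0 = 0 := by simp [hp, hφ0]
  have hdp0 : deriv p 0 = 0 := by
    rw [funext hp, ((hasDerivAt_integral_mul_deriv_sub_mul hy.continuous
      (hy.differentiable (by norm_num) 0) (hφ.differentiable (by norm_num) 0)
      (hφ.differentiable_deriv_two 0)).const_mul (1 / ω)).deriv, hφ0, hφ''0,
      intervalIntegral.integral_same]
    ring
  refine ⟨⟨by rw [← zero_add L, hpL, hp0], hp0⟩, ⟨?_, hdp0⟩, hpL⟩
  rw [← zero_add L, hpL.deriv, hdp0]

/-- Periodicity of the variation-of-parameters solution: if moreover `φ` is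
odd and `L`-periodic and `∫₀^L y = 0`, then `p(L) = 0 = p(0)`,
`p'(L) = 0 = p'(0)`, and `p` is `L`-periodic. -/
theorem variation_of_parameters_periodic
    (ω L : ℝ) (hω : 0 < ω) (hL : 0 < L) (φ y : ℝ → ℝ)
    (hφ : ContDiff ℝ 2 φ)
    (hφode : ∀ x : ℝ, ω * deriv (deriv φ) x + Real.sinh (φ x) = 0)
    (hφodd : ∀ x : ℝ, φ (-x) = -φ x)
    (hφper : ∀ x : ℝ, φ (x + L) = φ x)
    (hφ'0 : deriv φ 0 ≠ 0)
    (hy : ContDiff ℝ 2 y)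
    (hyode : ∀ x : ℝ, ω * deriv (deriv y) x + Real.cosh (φ x) * y x = 0)
    (hy0 : y 0 = 0) (hy'0 : deriv y 0 = 1 / deriv φ 0)
    (hymean : (∫ s in (0:ℝ)..L, y s) = 0)
    (p : ℝ → ℝ)
    (hp : ∀ x : ℝ, p x = (1/ω) * ((∫ s in (0:ℝ)..x, y s) * deriv φ x - y x * φ x)) :
    (p L = 0 ∧ p 0 = 0) ∧ (deriv p L = 0 ∧ deriv p 0 = 0) ∧
      (∀ x : ℝ, p (x + L) = p x) :=
  variation_of_parameters_periodic_general ω L hω φ y hφ hφode hφodd hφper hφ'0 hy hyode hy'0 hymean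
    p hp
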